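/- For any α > 1 there exists m = O(log n / (1 − 1/α)²) such that with high probability, n independent uniform random points in {−1,1}^m, after scaling by a suitable normalization, have all pairwise squared Euclidean distances lying in the interval (1/α, 1). Consequently, the only α-shortcut reachable graph on such a point set is the complete graph. -/

import Mathlib

/-!
For `i ≠ j` we have `sqDist ω i j = 2 (m - S)` with `S = ∑ r, sgn (ω i r) * sgn (ω j r)`,
a sum of `m` independent uniform signs; the pair is well separated unless `|S| ≥ ε m / 2`,
where `ε = 1 - 1/α`. Counting against the moment generating function,
`2^{nm} (cosh l)^m ≤ 2^{nm} exp (m l² / 2)`, bounds such outcomes by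
`2 · 2^{nm} exp (-ε² m / 8)` (Chernoff), and a union bound over the `n²` pairs together with
`m ≥ 32 log n / ε²` leaves at most `2^{nm} / n` bad outcomes. Once all squared distances lie
in `(1/α, 1)`, a shortcut `z ≠ j` would have `α d(z, j) > √α > 1 > d(i, j)`, so every
out-neighbourhood must contain the target itself.
-/

attribute [local instance] Classical.propDecidable

def sgn (b : Bool) : ℝ := if b then 1 else -1

/-- Squared Euclidean distance between the `i`-th and `j`-th random sign vectors of an
outcome `ω : Fin n → Fin m → Bool`. -/
def sqDist {n m : ℕ} (ω : Fin n → Fin m → Bool) (i j : Fin n) : ℝ :=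
  ∑ r : Fin m, (sgn (ω i r) - sgn (ω j r)) ^ 2

noncomputable def scDist {n m : ℕ} (α : ℝ) (ω : Fin n → Fin m → Bool) (i j : Fin n) : ℝ :=
  Real.sqrt (sqDist ω i j) / Real.sqrt (2 * m * (1 + (1 - 1 / α) / 2))

noncomputable def good {n m : ℕ} (α : ℝ) (ω : Fin n → Fin m → Bool) : Prop :=
  ∀ i j : Fin n, i ≠ j →
    sqDist ω i j / (2 * m * (1 + (1 - 1 / α) / 2)) ∈ Set.Ioo (1 / α) 1

open Finset Real

lemma sgn_not (b : Bool) : sgn (!b) = -sgn b := by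
  cases b <;> simp [sgn]

def signInner {κ ι : Type*} [Fintype ι] (ω : κ → ι → Bool) (i j : κ) : ℝ :=
  ∑ r, sgn (ω i r) * sgn (ω j r)

lemma sqDist_eq {n m : ℕ} (ω : Fin n → Fin m → Bool) (i j : Fin n) :
    sqDist ω i j = 2 * (m - signInner ω i j) := by
  have h (a b : Bool) : (sgn a - sgn b) ^ 2 = 2 - 2 * (sgn a * sgn b) := by
    cases a <;> cases b <;> norm_num [sgn]
  simp only [sqDist, signInner, h, sum_sub_distrib, ← mul_sum, sum_const, card_univ,
    Fintype.card_fin, nsmul_eq_mul]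
  ring

lemma card_filter_le_exp_mul_sum_exp {X : Type*} [Fintype X] (f : X → ℝ) (t : ℝ) :
    (#{x | t ≤ f x} : ℝ) ≤ exp (-t) * ∑ x, exp (f x) := by
  rw [exp_neg, ← div_eq_inv_mul, le_div_iff₀ (exp_pos t)]
  calc (#{x | t ≤ f x} : ℝ) * exp t
      ≤ ∑ x ∈ {x | t ≤ f x}, exp (f x) := by
        rw [← nsmul_eq_mul]
        exact card_nsmul_le_sum _ _ _ fun x hx => exp_le_exp.2 (mem_filter.1 hx).2
    _ ≤ ∑ x, exp (f x) :=
        sum_le_sum_of_subset_of_nonneg (subset_univ _) fun _ _ _ => (exp_pos _).le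

section SignInner

variable {κ ι : Type*} [Fintype κ] [Fintype ι] [DecidableEq κ] [DecidableEq ι]

lemma sum_exp_mul_sgn_mul_sgn {i j : κ} (hij : i ≠ j) (l : ℝ) :
    ∑ v : κ → Bool, exp (l * (sgn (v i) * sgn (v j))) = 2 ^ Fintype.card κ * cosh l := by
  -- flipping the `j`-th coordinate changes the sign of `sgn (v i) * sgn (v j)`
  have hflip : Function.Involutive fun v : κ → Bool => Function.update v j (!v j) := fun v => by
    ext k; rcases eq_or_ne k j with rfl | hk <;> simp [*]
  have hsymm : ∑ v : κ → Bool, exp (l * (sgn (v i) * sgn (v j)))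
      = ∑ v : κ → Bool, exp (-l * (sgn (v i) * sgn (v j))) :=
    Fintype.sum_bijective _ hflip.bijective _ _ fun v => by
      simp only [Function.update_self, Function.update_of_ne hij, sgn_not]
      ring_nf
  have hcosh (v : κ → Bool) :
      exp (l * (sgn (v i) * sgn (v j))) + exp (-l * (sgn (v i) * sgn (v j))) = 2 * cosh l := by
    rw [cosh_eq]; cases v i <;> cases v j <;> norm_num [sgn] <;> ring
  have hdouble : 2 * ∑ v : κ → Bool, exp (l * (sgn (v i) * sgn (v j)))
      = 2 * (2 ^ Fintype.card κ * cosh l) := by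
    rw [two_mul]; nth_rewrite 2 [hsymm]
    rw [← sum_add_distrib, sum_congr rfl fun v _ => hcosh v, sum_const, card_univ,
      Fintype.card_fun, Fintype.card_bool, nsmul_eq_mul]
    push_cast; ring
  linarith

lemma sum_prod_columns {β : Type*} [Fintype β] (g : (κ → β) → ℝ) :
    ∑ ω : κ → ι → β, ∏ r, g (fun k => ω k r) = (∑ v, g v) ^ Fintype.card ι := by
  rw [← Fintype.sum_equiv (Equiv.piComm fun _ _ => β) (fun τ => ∏ r, g (τ r)) _ fun _ => rfl,
    ← Fintype.prod_sum fun _ => g, prod_const, card_univ]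

lemma sum_exp_mul_signInner {i j : κ} (hij : i ≠ j) (l : ℝ) :
    ∑ ω : κ → ι → Bool, exp (l * signInner ω i j)
      = (2 ^ Fintype.card κ * cosh l) ^ Fintype.card ι := by
  simp only [signInner, mul_sum, exp_sum]
  rw [← sum_exp_mul_sgn_mul_sgn hij]
  exact sum_prod_columns fun v => exp (l * (sgn (v i) * sgn (v j)))

lemma card_filter_le_mul_signInner_le {i j : κ} (hij : i ≠ j) (l t : ℝ) :
    (#{ω : κ → ι → Bool | t ≤ l * signInner ω i j} : ℝ)
      ≤ 2 ^ (Fintype.card κ * Fintype.card ι) * exp (Fintype.card ι * l ^ 2 / 2 - t) := by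
  have hcosh : cosh l ^ Fintype.card ι ≤ exp (Fintype.card ι * l ^ 2 / 2) := by
    calc cosh l ^ Fintype.card ι ≤ exp (l ^ 2 / 2) ^ Fintype.card ι :=
          pow_le_pow_left₀ (cosh_pos l).le (cosh_le_exp_half_sq l) _
      _ = exp (Fintype.card ι * l ^ 2 / 2) := by rw [← exp_nat_mul]; ring_nf
  calc (#{ω : κ → ι → Bool | t ≤ l * signInner ω i j} : ℝ)
      ≤ exp (-t) * (2 ^ Fintype.card κ * cosh l) ^ Fintype.card ι := by
        rw [← sum_exp_mul_signInner hij]; exact card_filter_le_exp_mul_sum_exp _ t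
    _ ≤ exp (-t) * (2 ^ (Fintype.card κ * Fintype.card ι) *
          exp (Fintype.card ι * l ^ 2 / 2)) := by
        rw [mul_pow, pow_mul]; gcongr
    _ = _ := by rw [sub_eq_add_neg, exp_add]; ring

lemma card_filter_le_abs_signInner_le {i j : κ} (hij : i ≠ j) {t : ℝ} (ht : 0 ≤ t)
    (hι : 0 < Fintype.card ι) :
    (#{ω : κ → ι → Bool | t ≤ |signInner ω i j|} : ℝ)
      ≤ 2 * 2 ^ (Fintype.card κ * Fintype.card ι) * exp (-(t ^ 2 / (2 * Fintype.card ι))) := by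
  set m : ℝ := (Fintype.card ι : ℝ)
  have hm : 0 < m := by positivity
  have hsub : ({ω : κ → ι → Bool | t ≤ |signInner ω i j|} : Finset _)
      ⊆ ({ω : κ → ι → Bool | t ^ 2 / m ≤ t / m * signInner ω i j} : Finset _)
        ∪ ({ω : κ → ι → Bool | t ^ 2 / m ≤ -(t / m) * signInner ω i j} : Finset _) := by
    intro ω hω
    simp only [mem_filter, mem_univ, true_and, mem_union] at hω ⊢
    have htm : 0 ≤ t / m := by positivity
    rcases le_abs'.1 hω with h | h
    · right; rw [pow_two, mul_div_right_comm]; nlinarith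
    · left; rw [pow_two, mul_div_right_comm]; nlinarith
  -- both tails use the Chernoff-optimal parameter `l = ± t / m`
  have htail (l : ℝ) (hl : l ^ 2 = t ^ 2 / m ^ 2) :
      (#{ω : κ → ι → Bool | t ^ 2 / m ≤ l * signInner ω i j} : ℝ)
        ≤ 2 ^ (Fintype.card κ * Fintype.card ι) * exp (-(t ^ 2 / (2 * m))) := by
    convert card_filter_le_mul_signInner_le hij l (t ^ 2 / m) using 3
    rw [hl]; field_simp; ring
  calc (#{ω : κ → ι → Bool | t ≤ |signInner ω i j|} : ℝ)
      ≤ #{ω : κ → ι → Bool | t ^ 2 / m ≤ t / m * signInner ω i j}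
        + #{ω : κ → ι → Bool | t ^ 2 / m ≤ -(t / m) * signInner ω i j} := by
        exact_mod_cast (card_le_card hsub).trans (card_union_le _ _)
    _ ≤ _ := by
        rw [two_mul, add_mul]
        exact add_le_add (htail _ (by ring)) (htail _ (by ring))

end SignInner

lemma sqDist_div_mem_Ioo_of_abs_signInner_lt {n m : ℕ} {α : ℝ} (hα : 1 < α)
    {ω : Fin n → Fin m → Bool} {i j : Fin n} (h : |signInner ω i j| < (1 - 1 / α) * m / 2) :
    sqDist ω i j / (2 * m * (1 + (1 - 1 / α) / 2)) ∈ Set.Ioo (1 / α) 1 := by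
  set ε := 1 - 1 / α
  have hε : 0 < ε := by simp only [ε]; linarith [(div_lt_one (by linarith : 0 < α)).2 hα]
  have hm : (0 : ℝ) < m := by nlinarith [abs_nonneg (signInner ω i j)]
  have hS := abs_lt.1 h
  rw [sqDist_eq, Set.mem_Ioo, lt_div_iff₀ (by positivity), div_lt_one (by positivity),
    show 1 / α = 1 - ε by simp only [ε]; ring]
  constructor <;> nlinarith

lemma card_not_good_le {n m : ℕ} (hm : 0 < m) {α : ℝ} (hα : 1 < α) :
    (#{ω : Fin n → Fin m → Bool | ¬ good α ω} : ℝ)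
      ≤ n ^ 2 * (2 * 2 ^ (n * m) * exp (-((1 - 1 / α) ^ 2 * m / 8))) := by
  set t := (1 - 1 / α) * m / 2 with htdef
  have ht : 0 ≤ t := by
    have : 1 / α ≤ 1 := (div_le_one (by linarith)).2 hα.le
    simp only [t]; positivity
  have hpair (p : Fin n × Fin n) (hp : p ∈ (univ : Finset (Fin n)).offDiag) :
      (#{ω : Fin n → Fin m → Bool | t ≤ |signInner ω p.1 p.2|} : ℝ)
        ≤ 2 * 2 ^ (n * m) * exp (-((1 - 1 / α) ^ 2 * m / 8)) := by
    convert card_filter_le_abs_signInner_le (ι := Fin m) (mem_offDiag.1 hp).2.2 ht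
      (by rwa [Fintype.card_fin]) using 4
    · simp only [Fintype.card_fin]
    · rw [Fintype.card_fin, htdef]; field_simp; ring
  have hsub : ({ω : Fin n → Fin m → Bool | ¬ good α ω} : Finset _)
      ⊆ (univ : Finset (Fin n)).offDiag.biUnion
          fun p => {ω : Fin n → Fin m → Bool | t ≤ |signInner ω p.1 p.2|} := by
    intro ω hω
    simp only [good, not_forall, mem_filter, mem_univ, true_and] at hω
    obtain ⟨i, j, hij, hbad⟩ := hω
    simp only [mem_biUnion, mem_offDiag, mem_univ, true_and, mem_filter]
    exact ⟨(i, j), hij, not_lt.1 fun h => hbad (sqDist_div_mem_Ioo_of_abs_signInner_lt hα h)⟩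
  have hoff : ((univ : Finset (Fin n)).offDiag.card : ℝ) ≤ n ^ 2 := by
    rw [offDiag_card, card_univ, Fintype.card_fin, sq]
    exact_mod_cast Nat.sub_le _ _
  calc (#{ω : Fin n → Fin m → Bool | ¬ good α ω} : ℝ)
      ≤ ∑ p ∈ (univ : Finset (Fin n)).offDiag,
          (#{ω : Fin n → Fin m → Bool | t ≤ |signInner ω p.1 p.2|} : ℝ) := by
        exact_mod_cast (card_le_card hsub).trans card_biUnion_le
    _ ≤ (univ : Finset (Fin n)).offDiag.card
          * (2 * 2 ^ (n * m) * exp (-((1 - 1 / α) ^ 2 * m / 8))) := by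
        rw [← nsmul_eq_mul]; exact sum_le_card_nsmul _ _ _ hpair
    _ ≤ _ := by gcongr

lemma mem_of_forall_exists_mul_lt {X : Type*} {d : X → X → ℝ} {α : ℝ} (hα : 1 < α)
    (hd : ∀ a b, 0 ≤ d a b) (hsep : ∀ a b, a ≠ b → d a b ^ 2 ∈ Set.Ioo (1 / α) 1)
    {N : X → Finset X} (hN : ∀ i j, i ≠ j → ∃ z ∈ N i, α * d z j < d i j) {i j : X}
    (hij : i ≠ j) : j ∈ N i := by
  obtain ⟨z, hz, hlt⟩ := hN i j hij
  suffices z = j from this ▸ hz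
  by_contra hzj
  obtain ⟨hzj1, -⟩ := hsep z j hzj
  obtain ⟨-, hij1⟩ := hsep i j hij
  have hα0 : 0 < α := by linarith
  rw [div_lt_iff₀ hα0] at hzj1
  have := pow_lt_pow_left₀ hlt (mul_nonneg hα0.le (hd z j)) two_ne_zero
  nlinarith

lemma scDist_sq_mem_Ioo_of_good {n m : ℕ} {α : ℝ} (hα : 1 < α) {ω : Fin n → Fin m → Bool}
    (hω : good α ω) {a b : Fin n} (hab : a ≠ b) :
    scDist α ω a b ^ 2 ∈ Set.Ioo (1 / α) 1 := by
  have hq := hω a b hab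
  have hsq : 0 ≤ sqDist ω a b := sum_nonneg fun _ _ => sq_nonneg _
  rwa [scDist, ← sqrt_div hsq, sq_sqrt ((one_div_pos.2 (by linarith)).trans hq.1).le]

lemma exists_nat_between_log_div_sq {n : ℕ} (hn : 2 ≤ n) {ε : ℝ} (hε0 : 0 < ε)
    (hε1 : ε ≤ 1) :
    ∃ m : ℕ, 0 < m ∧ 32 * log n / ε ^ 2 ≤ m ∧ (m : ℝ) ≤ 34 * log n / ε ^ 2 := by
  have hlog : 1 / 2 ≤ log n := by
    have := log_two_gt_d9
    have := log_le_log two_pos (show (2 : ℝ) ≤ n by exact_mod_cast hn)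
    linarith
  have hL : 1 / 2 ≤ log n / ε ^ 2 := by
    rw [le_div_iff₀ (by positivity)]
    nlinarith [pow_le_one₀ hε0.le hε1 (n := 2)]
  refine ⟨⌈32 * log n / ε ^ 2⌉₊, Nat.ceil_pos.2 (by positivity), Nat.le_ceil _, ?_⟩
  have := Nat.ceil_lt_add_one (show 0 ≤ 32 * log n / ε ^ 2 by positivity)
  simp only [mul_div_assoc] at this ⊢
  linarith

lemma sq_mul_two_mul_exp_neg_le_inv {n : ℕ} (hn : 2 ≤ n) {x : ℝ} (hx : 4 * log n ≤ x) :
    (n : ℝ) ^ 2 * (2 * exp (-x)) ≤ 1 / n := by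
  have hn0 : (0 : ℝ) < n := by positivity
  have hexp : exp (-x) ≤ 1 / (n : ℝ) ^ 4 := by
    calc exp (-x) ≤ exp (-(4 * log n)) := exp_le_exp.2 (by linarith)
      _ = 1 / (n : ℝ) ^ 4 := by
        rw [← Nat.cast_ofNat, ← log_pow, exp_neg, exp_log (by positivity), one_div]
  calc (n : ℝ) ^ 2 * (2 * exp (-x)) ≤ (n : ℝ) ^ 2 * (2 * (1 / (n : ℝ) ^ 4)) := by gcongr
    _ = 2 / (n : ℝ) / n := by field_simp
    _ ≤ 1 / n := by
      gcongr
      rw [div_le_one hn0]; exact_mod_cast hn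

lemma one_sub_le_card_filter_div_card {X : Type*} [Fintype X] [Nonempty X] (p : X → Prop)
    [DecidablePred p] {δ : ℝ} (h : (#{x | ¬ p x} : ℝ) ≤ δ * Fintype.card X) :
    1 - δ ≤ #{x | p x} / Fintype.card X := by
  have hsplit : (#{x | p x} : ℝ) + #{x | ¬ p x} = Fintype.card X := by
    exact_mod_cast card_filter_add_card_filter_not p
  rw [le_div_iff₀ (by exact_mod_cast Fintype.card_pos)]
  linarith

/-- For any `α > 1` there is `m = O(log n / (1 - 1/α)²)` such that with
high probability (at least `1 - 1/n^c`), `n` uniform random points of `{-1,1}^m`, after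
scaling by `√(2m(1 + (1-1/α)/2))`, have all pairwise squared Euclidean distances in
`(1/α, 1)`; consequently, on any such outcome, every `α`-shortcut reachable graph on the
scaled points is complete. -/
theorem stmt10 : ∃ C c : ℝ, 0 < C ∧ 0 < c ∧ ∀ α : ℝ, 1 < α → ∀ n : ℕ, 2 ≤ n →
    ∃ m : ℕ, 0 < m ∧ (m : ℝ) ≤ C * Real.log n / (1 - 1 / α) ^ 2 ∧
      ((Finset.univ.filter (fun ω : Fin n → Fin m → Bool => good α ω)).card : ℝ) /
          (Fintype.card (Fin n → Fin m → Bool) : ℝ) ≥ 1 - 1 / (n : ℝ) ^ c ∧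
      ∀ ω : Fin n → Fin m → Bool, good α ω →
        ∀ N : Fin n → Finset (Fin n),
          (∀ i j : Fin n, i ≠ j →
            ∃ z ∈ N i, α * scDist α ω z j < scDist α ω i j) →
          ∀ i j : Fin n, i ≠ j → j ∈ N i := by
  refine ⟨34, 1, by norm_num, by norm_num, fun α hα n hn => ?_⟩
  have hinv : 0 < 1 / α ∧ 1 / α < 1 := ⟨by positivity, (div_lt_one (by linarith)).2 hα⟩
  have hε : 0 < 1 - 1 / α := by linarith
  obtain ⟨m, hm0, hm_lower, hm_upper⟩ := exists_nat_between_log_div_sq hn hε (by linarith)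
  refine ⟨m, hm0, hm_upper, ?_, fun ω hω N hN i j hij => mem_of_forall_exists_mul_lt hα
    (fun _ _ => by unfold scDist; positivity) (fun _ _ => scDist_sq_mem_Ioo_of_good hα hω) hN hij⟩
  have hcard : (Fintype.card (Fin n → Fin m → Bool) : ℝ) = 2 ^ (n * m) := by
    simp only [Fintype.card_fun, Fintype.card_fin, Fintype.card_bool]; push_cast; ring
  rw [rpow_one, ge_iff_le]
  apply one_sub_le_card_filter_div_card
  calc (#{ω : Fin n → Fin m → Bool | ¬ good α ω} : ℝ)
      ≤ n ^ 2 * (2 * 2 ^ (n * m) * exp (-((1 - 1 / α) ^ 2 * m / 8))) :=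
        card_not_good_le hm0 hα
    _ = n ^ 2 * (2 * exp (-((1 - 1 / α) ^ 2 * m / 8))) * 2 ^ (n * m) := by ring
    _ ≤ 1 / n * Fintype.card (Fin n → Fin m → Bool) := by
        rw [hcard]
        gcongr
        apply sq_mul_two_mul_exp_neg_le_inv hn
        rw [div_le_iff₀ (pow_pos hε 2)] at hm_lower
        linarith
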